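/- Let f be holomorphic on the strip D(ρ'') = {z ∈ ℂ : |Im z| ∈ (-ρ'', ρ'')} with sup_{|b|<ρ''} ‖f(·+ib)‖_{L²(ℝ)} =: N < ∞. Then for every ρ' < ρ'', sup_{|b|<ρ'} ‖f'(·+ib)‖_{L²(ℝ)} ≤ C N / (ρ'' - ρ') for an absolute constant C. -/

import Mathlib

/-!
By the Cauchy integral formula on the circle of radius `R = (ρ'' - ρ') / 2` around `c`,
`|f'(c)|` is bounded by `R⁻¹` times the circle average of `|f|`, so by Jensen
`|f'(c)|² ≤ R⁻² · avg_θ |f(c + R e^{iθ})|²`. Integrating over `c = x + ib` and swapping the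
integrals, each angle `θ` contributes the `L²` norm of `f` on the line `Im z = b + R sin θ`,
shifted by `R cos θ`; this is at most `N²`, giving `‖f'‖² ≤ N² / R² = (2N / (ρ'' - ρ'))²`.
-/

open MeasureTheory Real Set Metric Complex Interval
open scoped ENNReal

theorem Complex.circleMap_ofReal_add_mul_I (x b R θ : ℝ) :
    circleMap (x + b * I) R θ = ↑(x + R * Real.cos θ) + ↑(b + R * Real.sin θ) * I := by
  simp [circleMap, Complex.exp_mul_I, Complex.ext_iff]

theorem Complex.closedBall_subset_closedStrip (x b R : ℝ) :
    closedBall (x + b * I) R ⊆ {z : ℂ | |z.im - b| ≤ R} := fun z hz ↦ by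
  simpa using (abs_im_le_norm (z - (x + b * I))).trans (mem_closedBall_iff_norm.mp hz)

namespace MeasureTheory

variable {α E : Type*} [MeasurableSpace α] {μ : Measure α} [NormedAddCommGroup E] {g : α → E}
  {c : ℝ}

theorem lintegral_enorm_sq_le_of_integral_norm_sq_le (hg : Integrable (‖g ·‖ ^ 2) μ)
    (h : ∫ x, ‖g x‖ ^ 2 ∂μ ≤ c) : ∫⁻ x, ‖g x‖ₑ ^ 2 ∂μ ≤ ENNReal.ofReal c := by
  calc ∫⁻ x, ‖g x‖ₑ ^ 2 ∂μ = ENNReal.ofReal (∫ x, ‖g x‖ ^ 2 ∂μ) := by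
        simpa only [norm_pow, norm_norm, enorm_pow, enorm_norm]
          using (ofReal_integral_norm_eq_lintegral_enorm hg).symm
    _ ≤ ENNReal.ofReal c := ENNReal.ofReal_le_ofReal h

theorem integral_norm_sq_le_of_lintegral_enorm_sq_le (hc : 0 ≤ c)
    (h : ∫⁻ x, ‖g x‖ₑ ^ 2 ∂μ ≤ ENNReal.ofReal c) : ∫ x, ‖g x‖ ^ 2 ∂μ ≤ c := by
  refine (le_abs_self _).trans ?_
  rw [← norm_eq_abs, ← toReal_enorm]
  refine ENNReal.toReal_le_of_le_ofReal hc ((enorm_integral_le_lintegral_enorm _).trans ?_)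
  simpa only [enorm_pow, enorm_norm] using h

end MeasureTheory

namespace Real

theorem sq_circleAverage_le {g : ℂ → ℝ} {c : ℂ} {R : ℝ} (hg : CircleIntegrable g c R)
    (hg2 : CircleIntegrable (g · ^ 2) c R) :
    circleAverage g c R ^ 2 ≤ circleAverage (g · ^ 2) c R := by
  simp only [circleAverage_eq_intervalAverage]
  have h2π : volume (Ι 0 (2 * π)) = ENNReal.ofReal (2 * π) := by
    simp [uIoc_of_le (by positivity : (0:ℝ) ≤ 2 * π)]
  exact (even_two.convexOn_pow (𝕜 := ℝ)).map_set_average_le (continuousOn_pow 2) isClosed_univ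
    (by simp [h2π, pi_pos]) (by simp [h2π, ENNReal.mul_ne_top]) (by simp)
    (intervalIntegrable_iff.mp hg) (intervalIntegrable_iff.mp hg2)

section NormedSpace

variable {E : Type*} [NormedAddCommGroup E] [NormedSpace ℝ E]

theorem enorm_circleAverage_le (g : ℂ → E) (c : ℂ) (R : ℝ) :
    ‖circleAverage g c R‖ₑ
      ≤ (ENNReal.ofReal (2 * π))⁻¹ * ∫⁻ θ in Ioc 0 (2 * π), ‖g (circleMap c R θ)‖ₑ := by
  rw [circleAverage_def, enorm_smul, intervalIntegral.integral_of_le (by positivity),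
    enorm_of_nonneg (by positivity), ENNReal.ofReal_inv_of_pos (by positivity)]
  gcongr
  exact enorm_integral_le_lintegral_enorm _

theorem norm_circleAverage_le (f : ℂ → E) (c : ℂ) (R : ℝ) :
    ‖circleAverage f c R‖ ≤ circleAverage (‖f ·‖) c R := by
  rw [circleAverage_def, circleAverage_def, norm_smul, smul_eq_mul,
    norm_of_nonneg (by positivity)]
  gcongr
  exact intervalIntegral.norm_integral_le_integral_norm (by positivity)

theorem lintegral_enorm_circleAverage_le {G : ℂ → E} {b R : ℝ} {M : ℝ≥0∞} (hR : 0 ≤ R)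
    (hG : ContinuousOn G {z | |z.im - b| ≤ R})
    (hline : ∀ b' : ℝ, |b' - b| ≤ R → ∫⁻ x : ℝ, ‖G (x + b' * I)‖ₑ ≤ M) :
    ∫⁻ x : ℝ, ‖circleAverage G (x + b * I) R‖ₑ ≤ M := by
  have hsin (θ : ℝ) : |b + R * Real.sin θ - b| ≤ R := by
    simpa [abs_mul, abs_of_nonneg hR] using mul_le_of_le_one_right hR (abs_sin_le_one θ)
  have hmeas : Measurable fun p : ℝ × ℝ ↦ ‖G (circleMap (p.1 + b * I) R p.2)‖ₑ :=
    (hG.comp_continuous (by simp only [circleMap]; fun_prop) fun p ↦ by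
      simpa only [mem_ofPred_eq, circleMap_ofReal_add_mul_I, add_im, ofReal_im, mul_I_im,
        ofReal_re, zero_add] using hsin p.2).enorm.measurable
  set K := (ENNReal.ofReal (2 * π))⁻¹
  calc ∫⁻ x : ℝ, ‖circleAverage G (x + b * I) R‖ₑ
      ≤ ∫⁻ x : ℝ, K * ∫⁻ θ in Ioc 0 (2 * π), ‖G (circleMap (x + b * I) R θ)‖ₑ :=
        lintegral_mono fun x ↦ enorm_circleAverage_le _ _ _
    _ = K * ∫⁻ θ in Ioc 0 (2 * π), ∫⁻ x : ℝ, ‖G (circleMap (x + b * I) R θ)‖ₑ := by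
        rw [lintegral_const_mul' _ _ (by simp [K, pi_pos]),
          lintegral_lintegral_swap hmeas.aemeasurable]
    _ ≤ K * ∫⁻ θ in Ioc 0 (2 * π), M := by
        gcongr with θ
        simp_rw [circleMap_ofReal_add_mul_I]
        rw [lintegral_add_right_eq_self (fun y : ℝ ↦ ‖G (y + ↑(b + R * Real.sin θ) * I)‖ₑ)]
        exact hline _ (hsin θ)
    _ = M := by
        rw [setLIntegral_const, Real.volume_Ioc, sub_zero, mul_comm M, ← mul_assoc,
          ENNReal.inv_mul_cancel (by simp [pi_pos]) ENNReal.ofReal_ne_top, one_mul]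

end NormedSpace

section ComplexSpace

variable {E : Type*} [NormedAddCommGroup E] [NormedSpace ℂ E] [CompleteSpace E]
  {f : ℂ → E} {c : ℂ} {R : ℝ}

theorem _root_.DiffContOnCl.deriv_eq_circleAverage (hR : 0 < R)
    (hf : DiffContOnCl ℂ f (ball c R)) :
    deriv f c = circleAverage (fun z ↦ (z - c)⁻¹ • f z) c R := by
  rw [circleAverage_eq_circleIntegral hR.ne', eq_inv_smul_iff₀ (by simp [pi_ne_zero]),
    ← hf.deriv_eq_smul_circleIntegral hR]
  congr 1 with z
  rw [smul_smul, ← mul_inv, ← sq, one_div]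

theorem norm_deriv_sq_le_circleAverage (hR : 0 < R) (hf : DiffContOnCl ℂ f (ball c R)) :
    ‖deriv f c‖ ^ 2 ≤ circleAverage (‖f ·‖ ^ 2) c R / R ^ 2 := by
  have hcont : ContinuousOn (‖f ·‖) (sphere c R) :=
    (hf.continuousOn.mono (closure_ball c hR.ne' ▸ sphere_subset_closedBall)).norm
  have hnorm : ‖deriv f c‖ ≤ circleAverage (‖f ·‖) c R / R :=
    calc ‖deriv f c‖ = ‖circleAverage (fun z ↦ (z - c)⁻¹ • f z) c R‖ := by
          rw [hf.deriv_eq_circleAverage hR]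
      _ ≤ circleAverage (fun z ↦ ‖(z - c)⁻¹ • f z‖) c R := norm_circleAverage_le _ _ _
      _ = circleAverage (fun z ↦ R⁻¹ • ‖f z‖) c R := circleAverage_congr_sphere fun z hz ↦ by
          rw [abs_of_pos hR, mem_sphere, dist_eq_norm] at hz
          simp [norm_smul, hz]
      _ = circleAverage (‖f ·‖) c R / R := by
          rw [circleAverage_fun_smul, smul_eq_mul, inv_mul_eq_div]
  calc ‖deriv f c‖ ^ 2 ≤ (circleAverage (‖f ·‖) c R / R) ^ 2 := by gcongr
    _ = circleAverage (‖f ·‖) c R ^ 2 / R ^ 2 := div_pow _ _ _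
    _ ≤ circleAverage (‖f ·‖ ^ 2) c R / R ^ 2 := by
      gcongr
      exact sq_circleAverage_le (hcont.circleIntegrable hR.le)
        ((hcont.pow 2).circleIntegrable hR.le)

end ComplexSpace

end Real

namespace Complex

variable {E : Type*} [NormedAddCommGroup E] [NormedSpace ℂ E] [CompleteSpace E]
  {f : ℂ → E} {R : ℝ}

theorem lintegral_enorm_deriv_sq_le {b : ℝ} {M : ℝ≥0∞} (hR : 0 < R)
    (hf : DifferentiableOn ℂ f {z | |z.im - b| ≤ R})
    (hline : ∀ b' : ℝ, |b' - b| ≤ R → ∫⁻ x : ℝ, ‖f (x + b' * I)‖ₑ ^ 2 ≤ M) :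
    ∫⁻ x : ℝ, ‖deriv f (x + b * I)‖ₑ ^ 2 ≤ M / ENNReal.ofReal (R ^ 2) := by
  have hpt (x : ℝ) : ‖deriv f (x + b * I)‖ₑ ^ 2
      ≤ ‖circleAverage (‖f ·‖ ^ 2) (x + b * I) R‖ₑ / ENNReal.ofReal (R ^ 2) := by
    have hdiff : DiffContOnCl ℂ f (ball (x + b * I) R) :=
      (hf.mono ((closure_ball _ hR.ne').trans_subset
        (closedBall_subset_closedStrip x b R))).diffContOnCl
    calc ‖deriv f (x + b * I)‖ₑ ^ 2 = ENNReal.ofReal (‖deriv f (x + b * I)‖ ^ 2) := by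
          rw [ENNReal.ofReal_pow (norm_nonneg _), ofReal_norm]
      _ ≤ ENNReal.ofReal (circleAverage (‖f ·‖ ^ 2) (x + b * I) R / R ^ 2) :=
          ENNReal.ofReal_le_ofReal (norm_deriv_sq_le_circleAverage hR hdiff)
      _ ≤ ‖circleAverage (‖f ·‖ ^ 2) (x + b * I) R‖ₑ / ENNReal.ofReal (R ^ 2) := by
          rw [ENNReal.ofReal_div_of_pos (by positivity)]
          gcongr
          exact ofReal_le_enorm _
  calc ∫⁻ x : ℝ, ‖deriv f (x + b * I)‖ₑ ^ 2
      ≤ ∫⁻ x : ℝ, ‖circleAverage (‖f ·‖ ^ 2) (x + b * I) R‖ₑ / ENNReal.ofReal (R ^ 2) :=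
        lintegral_mono hpt
    _ = (∫⁻ x : ℝ, ‖circleAverage (‖f ·‖ ^ 2) (x + b * I) R‖ₑ) / ENNReal.ofReal (R ^ 2) := by
        simp only [div_eq_mul_inv]
        exact lintegral_mul_const' _ _ (by simp [hR.ne'])
    _ ≤ M / ENNReal.ofReal (R ^ 2) := by
        gcongr
        exact lintegral_enorm_circleAverage_le hR.le (hf.continuousOn.norm.pow 2) fun b' hb' ↦
          by simpa only [enorm_pow, enorm_norm] using hline b' hb'

end Complex

/-- Cauchy estimate in the analytic spaces `H^{0,ρ}`: a function holomorphic on a horizontal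
strip with uniformly bounded `L²` norms on horizontal lines loses a factor `ρ'' - ρ'` when
differentiated. -/
theorem cauchy_estimate_strip :
    ∃ C : ℝ, 0 < C ∧ ∀ ρ'' ρ' N : ℝ, 0 < ρ' → ρ' < ρ'' → 0 ≤ N →
      ∀ f : ℂ → ℂ,
        DifferentiableOn ℂ f {z : ℂ | |z.im| < ρ''} →
        (∀ b : ℝ, |b| < ρ'' →
          Integrable (fun x : ℝ => ‖f (x + b * Complex.I)‖ ^ 2)) →
        (∀ b : ℝ, |b| < ρ'' →
          (∫ x : ℝ, ‖f (x + b * Complex.I)‖ ^ 2) ≤ N ^ 2) →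
        ∀ b : ℝ, |b| < ρ' →
          (∫ x : ℝ, ‖deriv f (x + b * Complex.I)‖ ^ 2) ≤ (C * N / (ρ'' - ρ')) ^ 2 := by
  refine ⟨2, two_pos, fun ρ'' ρ' N _ hlt _ f hf hInt hBound b hb ↦ ?_⟩
  set R := (ρ'' - ρ') / 2 with hR_def
  have hR : 0 < R := by linarith
  have hnear {b' : ℝ} (hb' : |b' - b| ≤ R) : |b'| < ρ'' := by
    linarith [abs_sub_abs_le_abs_sub b' b]
  have hderiv := lintegral_enorm_deriv_sq_le hR (hf.mono fun z hz ↦ hnear hz) fun b' hb' ↦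
    lintegral_enorm_sq_le_of_integral_norm_sq_le (hInt b' (hnear hb')) (hBound b' (hnear hb'))
  refine integral_norm_sq_le_of_lintegral_enorm_sq_le (by positivity) (hderiv.trans_eq ?_)
  rw [← ENNReal.ofReal_div_of_pos (by positivity), hR_def]
  congr 1
  field_simp
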